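/- arXiv:2302.08311 — 2 statements merged into one kernel-verified Lean document; each statement's English description precedes it below -/
import Mathlib

section
/- For every α ∈ (-1,0) and every r ∈ [1/2,1), ∫₀^{2π} |1 - re^{it}|^{-(α+1)} dt ≤ 3^{(α+1)/2} · 2^{1-α} · Γ(-α)Γ(1/2)/Γ(1/2 - α). -/
open MeasureTheory Real Complex Filter Set
open scoped ENNReal Topology NNReal

noncomputable section

/-- The open unit disk in `ℂ`. -/
def unitDisk : Set ℂ := Metric.ball 0 1

/-- The constant `C_α = Γ(1+α/2)² / Γ(1+α)`. -/
def Cconst (α : ℝ) : ℝ := Real.Gamma (1 + α / 2) ^ 2 / Real.Gamma (1 + α)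

/-- The Poisson type kernel `K_α(z) = C_α (1-|z|²)^{α+1} / |1-z|^{α+2}`. -/
def Kker (α : ℝ) (z : ℂ) : ℝ :=
  Cconst α * (1 - ‖z‖ ^ 2) ^ (α + 1) / ‖1 - z‖ ^ (α + 2)

/-- The Poisson type integral `K_α[F](z) = (1/2π) ∫₀^{2π} K_α(z e^{-it}) F(t) dt`. -/
def poissonInt (α : ℝ) (F : ℝ → ℂ) (z : ℂ) : ℂ :=
  (1 / (2 * π)) * ∫ t in (0:ℝ)..(2 * π),
    ((Kker α (z * Complex.exp (-(t : ℂ) * Complex.I)) : ℝ) : ℂ) * F t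

/-- `polar r θ = r e^{iθ}`. -/
def polar (r θ : ℝ) : ℂ := (r : ℂ) * Complex.exp ((θ : ℂ) * Complex.I)

/-- The Wirtinger derivative `∂_z f = (f_x - i f_y)/2`. -/
def pderivZ (f : ℂ → ℂ) (z : ℂ) : ℂ :=
  (fderiv ℝ f z 1 - Complex.I * fderiv ℝ f z Complex.I) / 2

/-- The Wirtinger derivative `∂_{z̄} f = (f_x + i f_y)/2`. -/
def pderivZbar (f : ℂ → ℂ) (z : ℂ) : ℂ :=
  (fderiv ℝ f z 1 + Complex.I * fderiv ℝ f z Complex.I) / 2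

/-- The radial derivative `∂_r f(re^{iθ})`, as a function of the polar coordinates. -/
def radialDeriv (f : ℂ → ℂ) (r θ : ℝ) : ℂ :=
  deriv (fun s : ℝ => f (polar s θ)) r

/-- The radial derivative `∂_r f(z)`, as a function of `z`. -/
def radialDerivFun (f : ℂ → ℂ) (z : ℂ) : ℂ :=
  radialDeriv f ‖z‖ (Complex.arg z)

/-- The angular derivative `∂_θ f(re^{iθ})`, as a function of the polar coordinates. -/
def angularDeriv (f : ℂ → ℂ) (r θ : ℝ) : ℂ :=
  deriv (fun φ : ℝ => f (polar r φ)) θ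

/-- The integral mean `M_p(h) = ((1/2π)∫₀^{2π} |h(θ)|^p dθ)^{1/p}` over the circle,
with the sup for `p = ∞`. -/
def circMean (p : ℝ≥0∞) (h : ℝ → ℂ) : ℝ≥0∞ :=
  if p = ∞ then ⨆ θ : ℝ, (‖h θ‖₊ : ℝ≥0∞)
  else ((∫⁻ θ in Set.Ioc (0:ℝ) (2 * π), (‖h θ‖₊ : ℝ≥0∞) ^ p.toReal) /
      ENNReal.ofReal (2 * π)) ^ (1 / p.toReal)

/-- The Hardy type norm `‖g‖_{H^p_G(D)} = sup_{0 ≤ r < 1} M_p(r, g)` of a function `g`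
given in polar coordinates `(r, θ)`. -/
def hardyNorm (p : ℝ≥0∞) (g : ℝ → ℝ → ℂ) : ℝ≥0∞ :=
  ⨆ r ∈ Set.Ico (0:ℝ) 1, circMean p (g r)

/-- The Bergman type norm `‖g‖_{B^p_G(D)} = (∫_D |g|^p dσ)^{1/p}` with `dσ` the normalized
area measure on the unit disk; essential sup for `p = ∞`. -/
def bergmanNorm (p : ℝ≥0∞) (g : ℂ → ℂ) : ℝ≥0∞ :=
  if p = ∞ then essSup (fun z => (‖g z‖₊ : ℝ≥0∞)) (volume.restrict unitDisk)
  else ((∫⁻ z in unitDisk, (‖g z‖₊ : ℝ≥0∞) ^ p.toReal) / ENNReal.ofReal π) ^ (1 / p.toReal)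

/-- The `L^p` norm of a (`2π`-periodic) function on the circle. -/
def circleLp (p : ℝ≥0∞) (F : ℝ → ℂ) : ℝ≥0∞ :=
  if p = ∞ then essSup (fun θ => (‖F θ‖₊ : ℝ≥0∞)) volume
  else ((∫⁻ θ in Set.Ioc (0:ℝ) (2 * π), (‖F θ‖₊ : ℝ≥0∞) ^ p.toReal) /
      ENNReal.ofReal (2 * π)) ^ (1 / p.toReal)

/-- `F` is `2π`-periodic and absolutely continuous on compact intervals with a.e. derivative
`F'`; this is encoded, equivalently, by the fundamental theorem of calculus: `F'` is locally
integrable and `F` is the indefinite integral of `F'`. -/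
def PeriodicAC (F F' : ℝ → ℂ) : Prop :=
  Function.Periodic F (2 * π) ∧
  (∀ a b : ℝ, IntervalIntegrable F' volume a b) ∧
  (∀ θ : ℝ, F θ = F 0 + ∫ t in (0:ℝ)..θ, F' t)

/-- `F` belongs to `L^p` of the circle. -/
def MemLpT (p : ℝ≥0∞) (F : ℝ → ℂ) : Prop :=
  AEStronglyMeasurable F volume ∧ circleLp p F < ∞

/-- `‖D_f(z)‖ = |∂_z f(z)| + |∂_{z̄} f(z)|`. -/
def Dnorm (f : ℂ → ℂ) (z : ℂ) : ℝ :=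
  ‖pderivZ f z‖ + ‖pderivZbar f z‖

/-- The Jacobian `J_f(z) = |∂_z f(z)|² - |∂_{z̄} f(z)|²`. -/
def jacobian (f : ℂ → ℂ) (z : ℂ) : ℝ :=
  ‖pderivZ f z‖ ^ 2 - ‖pderivZbar f z‖ ^ 2

/-- `f` is a (sense-preserving) `(K,K')`-elliptic mapping of the unit disk. -/
def IsElliptic (K K' : ℝ) (f : ℂ → ℂ) : Prop :=
  ContinuousOn f unitDisk ∧
  (∀ᵐ z ∂(volume.restrict unitDisk), 0 < jacobian f z) ∧
  (∀ᵐ z ∂(volume.restrict unitDisk), Dnorm f z ^ 2 ≤ K * jacobian f z + K')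

/-! For `r ≥ 1/3`, `|1 - r e^{it}|² = (1 - r)² + 4r sin²(t/2) ≥ (4/3) sin²(t/2)`, so with
`c = -(α + 1) ∈ (-1, 0)` the integrand is at most `(2/√3)^c sin(t/2)^c`. By the symmetry
`t ↦ 2π - t` and the scaling `t = 2u`, `∫₀^{2π} sin(t/2)^c dt = 4 ∫₀^{π/2} sin^c u du`, and the
substitution `x = sin u` turns this into
`∫₀¹ x^c (1 - x²)^{-1/2} dx ≤ ∫₀¹ x^c (1 - x)^{-1/2} dx = B(-α, 1/2) = Γ(-α)Γ(1/2)/Γ(1/2 - α)`. -/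

section Beta

variable {u v : ℝ}

private lemma betaIntegrand_ofReal_eqOn :
    EqOn (fun x : ℝ => (x : ℂ) ^ ((u : ℂ) - 1) * (1 - (x : ℂ)) ^ ((v : ℂ) - 1))
      (fun x : ℝ => ((x ^ (u - 1) * (1 - x) ^ (v - 1) : ℝ) : ℂ)) (uIcc 0 1) := by
  intro x hx
  rw [uIcc_of_le zero_le_one] at hx
  simp only [ofReal_mul, ofReal_cpow hx.1, ofReal_cpow (sub_nonneg.2 hx.2), ofReal_sub,
    ofReal_one]

lemma intervalIntegrable_rpow_mul_one_sub_rpow (hu : 0 < u) (hv : 0 < v) :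
    IntervalIntegrable (fun x : ℝ => x ^ (u - 1) * (1 - x) ^ (v - 1)) volume 0 1 := by
  have h := (betaIntegral_convergent (u := u) (v := v) (by simpa) (by simpa)).congr
    (betaIntegrand_ofReal_eqOn.mono uIoc_subset_uIcc)
  have h_re := (intervalIntegrable_iff.1 h).re
  simp only [RCLike.re_to_complex, ofReal_re] at h_re
  exact intervalIntegrable_iff.2 h_re

lemma integral_rpow_mul_one_sub_rpow (hu : 0 < u) (hv : 0 < v) :
    ∫ x in (0 : ℝ)..1, x ^ (u - 1) * (1 - x) ^ (v - 1) =
      Real.Gamma u * Real.Gamma v / Real.Gamma (u + v) := by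
  have h := Complex.Gamma_mul_Gamma_eq_betaIntegral (s := u) (t := v) (by simpa) (by simpa)
  rw [betaIntegral, intervalIntegral.integral_congr betaIntegrand_ofReal_eqOn,
    intervalIntegral.integral_ofReal, ← ofReal_add, Gamma_ofReal, Gamma_ofReal, Gamma_ofReal,
    ← ofReal_mul, ← ofReal_mul, ofReal_inj] at h
  rw [h, mul_div_cancel_left₀ _ (Real.Gamma_pos_of_pos (add_pos hu hv)).ne']

end Beta

section SinPower

private lemma rpow_mul_one_sub_sq_rpow_le {c x : ℝ} (hx : x ∈ Ioo 0 1) :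
    x ^ c * (1 - x ^ 2) ^ (-(1 / 2) : ℝ) ≤ x ^ (c + 1 - 1) * (1 - x) ^ ((1 / 2 : ℝ) - 1) := by
  obtain ⟨hx0, hx1⟩ := hx
  rw [add_sub_cancel_right, show (1 / 2 : ℝ) - 1 = -(1 / 2) by norm_num]
  gcongr _ * ?_
  exact rpow_le_rpow_of_nonpos (by linarith) (by nlinarith) (by norm_num)

variable {c : ℝ}

private lemma integrableOn_beta_integrand_half (hc : -1 < c) :
    IntegrableOn (fun x : ℝ => x ^ (c + 1 - 1) * (1 - x) ^ ((1 / 2 : ℝ) - 1)) (Ioo 0 1) :=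
  (intervalIntegrable_rpow_mul_one_sub_rpow (by linarith) one_half_pos).1.mono_set
    Ioo_subset_Ioc_self

lemma integrableOn_rpow_mul_one_sub_sq_rpow (hc : -1 < c) :
    IntegrableOn (fun x : ℝ => x ^ c * (1 - x ^ 2) ^ (-(1 / 2) : ℝ)) (Ioo 0 1) := by
  refine (integrableOn_beta_integrand_half hc).mono' (by fun_prop) ?_
  filter_upwards [ae_restrict_mem measurableSet_Ioo] with x hx
  rw [Real.norm_of_nonneg
    (mul_nonneg (rpow_nonneg hx.1.le _) (rpow_nonneg (by nlinarith [hx.1, hx.2]) _))]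
  exact rpow_mul_one_sub_sq_rpow_le hx

lemma setIntegral_rpow_mul_one_sub_sq_rpow_le (hc : -1 < c) :
    ∫ x in Ioo (0 : ℝ) 1, x ^ c * (1 - x ^ 2) ^ (-(1 / 2) : ℝ) ≤
      Real.Gamma (c + 1) * Real.Gamma (1 / 2) / Real.Gamma (c + 1 + 1 / 2) := by
  rw [← integral_rpow_mul_one_sub_rpow (by linarith) one_half_pos,
    intervalIntegral.integral_of_le zero_le_one, integral_Ioc_eq_integral_Ioo]
  exact setIntegral_mono_on (integrableOn_rpow_mul_one_sub_sq_rpow hc)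
    (integrableOn_beta_integrand_half hc) measurableSet_Ioo
    fun x hx => rpow_mul_one_sub_sq_rpow_le hx

lemma sin_image_Ioo_zero_pi_div_two : Real.sin '' Ioo 0 (π / 2) = Ioo 0 1 := by
  ext y
  constructor
  · rintro ⟨x, ⟨hx0, hx1⟩, rfl⟩
    refine ⟨sin_pos_of_pos_of_lt_pi hx0 (by linarith [pi_pos]), ?_⟩
    rw [← Real.sin_pi_div_two]
    exact strictMonoOn_sin ⟨by linarith, hx1.le⟩ ⟨by linarith [pi_pos], le_rfl⟩ hx1
  · rintro ⟨hy0, hy1⟩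
    exact ⟨arcsin y, ⟨arcsin_pos.2 hy0, arcsin_lt_pi_div_two.2 hy1⟩,
      sin_arcsin (by linarith) hy1.le⟩

private lemma abs_cos_smul_rpow_mul_one_sub_sq_rpow (c : ℝ) :
    EqOn (fun u => |Real.cos u| • (Real.sin u ^ c * (1 - Real.sin u ^ 2) ^ (-(1 / 2) : ℝ)))
      (fun u => Real.sin u ^ c) (Ioo 0 (π / 2)) := by
  intro u ⟨hu0, hu1⟩
  have hcos : 0 < Real.cos u := cos_pos_of_mem_Ioo ⟨by linarith, hu1⟩
  simp only [smul_eq_mul]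
  rw [← Real.cos_sq', abs_of_pos hcos, ← rpow_natCast_mul hcos.le]
  norm_num [rpow_neg_one]
  field_simp

private lemma hasDerivWithinAt_sin_Ioo :
    ∀ x ∈ Ioo (0 : ℝ) (π / 2), HasDerivWithinAt Real.sin (Real.cos x) (Ioo 0 (π / 2)) x :=
  fun x _ => (Real.hasDerivAt_sin x).hasDerivWithinAt

private lemma injOn_sin_Ioo : InjOn Real.sin (Ioo 0 (π / 2)) :=
  Real.injOn_sin.mono fun _ hx => show _ ∈ Icc _ _ from ⟨by linarith [hx.1, pi_pos], hx.2.le⟩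

lemma integrableOn_sin_rpow_iff (c : ℝ) :
    IntegrableOn (fun u => Real.sin u ^ c) (Ioo 0 (π / 2)) ↔
      IntegrableOn (fun x : ℝ => x ^ c * (1 - x ^ 2) ^ (-(1 / 2) : ℝ)) (Ioo 0 1) := by
  rw [← sin_image_Ioo_zero_pi_div_two, integrableOn_image_iff_integrableOn_abs_deriv_smul
    measurableSet_Ioo hasDerivWithinAt_sin_Ioo injOn_sin_Ioo]
  exact integrableOn_congr_fun (abs_cos_smul_rpow_mul_one_sub_sq_rpow c).symm measurableSet_Ioo

lemma setIntegral_sin_rpow (c : ℝ) :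
    ∫ u in Ioo 0 (π / 2), Real.sin u ^ c =
      ∫ x in Ioo (0 : ℝ) 1, x ^ c * (1 - x ^ 2) ^ (-(1 / 2) : ℝ) := by
  rw [← sin_image_Ioo_zero_pi_div_two, integral_image_eq_integral_abs_deriv_smul
    measurableSet_Ioo hasDerivWithinAt_sin_Ioo injOn_sin_Ioo]
  exact setIntegral_congr_fun measurableSet_Ioo (abs_cos_smul_rpow_mul_one_sub_sq_rpow c).symm

lemma intervalIntegrable_sin_rpow (hc : -1 < c) :
    IntervalIntegrable (fun u => Real.sin u ^ c) volume 0 (π / 2) := by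
  rw [intervalIntegrable_iff_integrableOn_Ioo_of_le (by positivity)]
  exact (integrableOn_sin_rpow_iff c).2 (integrableOn_rpow_mul_one_sub_sq_rpow hc)

lemma integral_sin_rpow_le (hc : -1 < c) :
    ∫ u in (0 : ℝ)..π / 2, Real.sin u ^ c ≤
      Real.Gamma (c + 1) * Real.Gamma (1 / 2) / Real.Gamma (c + 1 + 1 / 2) := by
  rw [intervalIntegral.integral_of_le (by positivity), integral_Ioc_eq_integral_Ioo,
    setIntegral_sin_rpow]
  exact setIntegral_rpow_mul_one_sub_sq_rpow_le hc

end SinPower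

section Symmetric

variable {E : Type*} [NormedAddCommGroup E] {f : ℝ → E} {a : ℝ}

private lemma IntervalIntegrable.half_right_of_symm (hf : ∀ x, f (a - x) = f x)
    (h : IntervalIntegrable f volume 0 (a / 2)) : IntervalIntegrable f volume (a / 2) a := by
  simpa [hf, show a - a / 2 = a / 2 by ring] using (h.comp_sub_left a).symm

lemma IntervalIntegrable.of_half_of_symm (hf : ∀ x, f (a - x) = f x)
    (h : IntervalIntegrable f volume 0 (a / 2)) : IntervalIntegrable f volume 0 a :=
  h.trans (h.half_right_of_symm hf)

lemma integral_eq_two_nsmul_of_symm [NormedSpace ℝ E] (hf : ∀ x, f (a - x) = f x)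
    (h : IntervalIntegrable f volume 0 (a / 2)) :
    ∫ x in (0 : ℝ)..a, f x = 2 • ∫ x in (0 : ℝ)..a / 2, f x := by
  have hreflect : ∫ x in a / 2..a, f x = ∫ x in (0 : ℝ)..a / 2, f x := by
    simpa [hf, show a - a / 2 = a / 2 by ring] using
      (intervalIntegral.integral_comp_sub_left f a (a := 0) (b := a / 2)).symm
  rw [← intervalIntegral.integral_add_adjacent_intervals h (h.half_right_of_symm hf), hreflect,
    two_nsmul]

end Symmetric

section SinHalfPower

variable {c : ℝ}

private lemma sin_rpow_pi_sub (x : ℝ) : Real.sin (π - x) ^ c = Real.sin x ^ c := by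
  rw [Real.sin_pi_sub]

lemma intervalIntegrable_sin_half_rpow (hc : -1 < c) :
    IntervalIntegrable (fun t => Real.sin (t / 2) ^ c) volume 0 (2 * π) := by
  have h := ((intervalIntegrable_sin_rpow hc).of_half_of_symm sin_rpow_pi_sub).comp_mul_left
    (c := 2⁻¹)
  simpa [div_eq_inv_mul, mul_comm] using h

lemma integral_sin_half_rpow (hc : -1 < c) :
    ∫ t in (0 : ℝ)..2 * π, Real.sin (t / 2) ^ c = 4 * ∫ u in (0 : ℝ)..π / 2, Real.sin u ^ c := by
  rw [intervalIntegral.integral_comp_div (fun u => Real.sin u ^ c) two_ne_zero, zero_div,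
    mul_div_cancel_left₀ _ two_ne_zero,
    integral_eq_two_nsmul_of_symm sin_rpow_pi_sub (intervalIntegrable_sin_rpow hc)]
  simp only [smul_eq_mul, nsmul_eq_mul]
  ring

lemma integral_sin_half_rpow_le (hc : -1 < c) :
    ∫ t in (0 : ℝ)..2 * π, Real.sin (t / 2) ^ c ≤
      4 * (Real.Gamma (c + 1) * Real.Gamma (1 / 2) / Real.Gamma (c + 1 + 1 / 2)) := by
  rw [integral_sin_half_rpow hc]
  gcongr
  exact integral_sin_rpow_le hc

end SinHalfPower

section OneSubExp

variable {r c : ℝ}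

lemma norm_one_sub_ofReal_mul_exp_sq (r t : ℝ) :
    ‖1 - (r : ℂ) * Complex.exp ((t : ℂ) * Complex.I)‖ ^ 2 =
      (1 - r) ^ 2 + 4 * r * Real.sin (t / 2) ^ 2 := by
  have hsin_half : Real.sin (t / 2) ^ 2 = 1 / 2 - Real.cos t / 2 := by
    rw [Real.sin_sq_eq_half_sub, mul_div_cancel₀ _ two_ne_zero]
  rw [Complex.sq_norm, Complex.normSq_apply]
  simp only [sub_re, sub_im, one_re, one_im, mul_re, mul_im, ofReal_re, ofReal_im,
    exp_ofReal_mul_I_re, exp_ofReal_mul_I_im]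
  linear_combination r ^ 2 * Real.sin_sq_add_cos_sq t - 4 * r * hsin_half

lemma two_div_sqrt_three_mul_abs_sin_half_le_norm (hr : 1 / 3 ≤ r) (t : ℝ) :
    2 / √3 * |Real.sin (t / 2)| ≤ ‖1 - (r : ℂ) * Complex.exp ((t : ℂ) * Complex.I)‖ := by
  rw [← sq_le_sq₀ (by positivity) (norm_nonneg _), norm_one_sub_ofReal_mul_exp_sq, mul_pow,
    div_pow, sq_sqrt (by norm_num : (0 : ℝ) ≤ 3), sq_abs]
  nlinarith [sq_nonneg (1 - r), sq_nonneg (Real.sin (t / 2))]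

lemma norm_one_sub_ofReal_mul_exp_rpow_le (hr : 1 / 3 ≤ r) (hc : c ≤ 0) {t : ℝ}
    (ht : t ∈ Ioo 0 (2 * π)) :
    ‖1 - (r : ℂ) * Complex.exp ((t : ℂ) * Complex.I)‖ ^ c ≤
      (2 / √3) ^ c * Real.sin (t / 2) ^ c := by
  have hsin : 0 < Real.sin (t / 2) :=
    sin_pos_of_pos_of_lt_pi (by linarith [ht.1]) (by linarith [ht.2])
  rw [← mul_rpow (by positivity) hsin.le]
  refine rpow_le_rpow_of_nonpos (by positivity) ?_ hc
  simpa [abs_of_pos hsin] using two_div_sqrt_three_mul_abs_sin_half_le_norm hr t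

lemma intervalIntegrable_norm_one_sub_ofReal_mul_exp_rpow (hr : 1 / 3 ≤ r) (hc : -1 < c)
    (hc0 : c ≤ 0) :
    IntervalIntegrable (fun t : ℝ => ‖1 - (r : ℂ) * Complex.exp ((t : ℂ) * Complex.I)‖ ^ c)
      volume 0 (2 * π) := by
  refine ((intervalIntegrable_sin_half_rpow hc).const_mul ((2 / √3) ^ c)).mono_fun'
    (Measurable.pow_const (by fun_prop) _).aestronglyMeasurable ?_
  rw [uIoc_of_le (by positivity), Measure.restrict_congr_set Ioo_ae_eq_Ioc.symm]
  filter_upwards [ae_restrict_mem measurableSet_Ioo] with t ht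
  rw [norm_of_nonneg (rpow_nonneg (norm_nonneg _) _)]
  exact norm_one_sub_ofReal_mul_exp_rpow_le hr hc0 ht

end OneSubExp

lemma two_div_sqrt_three_rpow_neg_mul_four (α : ℝ) :
    (2 / √3 : ℝ) ^ (-(α + 1)) * 4 = 3 ^ ((α + 1) / 2) * 2 ^ (1 - α) := by
  rw [div_rpow (by norm_num) (by positivity), sqrt_eq_rpow, ← rpow_mul (by norm_num),
    show 1 - α = -(α + 1) + 2 by ring, rpow_add two_pos,
    show 1 / 2 * -(α + 1) = -((α + 1) / 2) by ring, rpow_neg (by norm_num : (0 : ℝ) ≤ 3)]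
  field_simp
  norm_num

theorem stmt8_general (α : ℝ) (hα1 : -1 < α) (hα2 : α < 0) (r : ℝ) (hr : 1/2 ≤ r) :
    (∫ t in (0:ℝ)..(2 * π),
        ‖1 - (r : ℂ) * Complex.exp ((t : ℂ) * Complex.I)‖ ^ (-(α + 1))) ≤
      (3:ℝ) ^ ((α + 1) / 2) * (2:ℝ) ^ (1 - α) *
        (Real.Gamma (-α) * Real.Gamma (1/2) / Real.Gamma (1/2 - α)) := by
  have hr3 : 1 / 3 ≤ r := by linarith
  have hc : -1 < -(α + 1) := by linarith
  have hc0 : -(α + 1) ≤ 0 := by linarith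
  calc _ ≤ ∫ t in (0 : ℝ)..2 * π, (2 / √3) ^ (-(α + 1)) * Real.sin (t / 2) ^ (-(α + 1)) :=
        intervalIntegral.integral_mono_on_of_le_Ioo (by positivity)
          (intervalIntegrable_norm_one_sub_ofReal_mul_exp_rpow hr3 hc hc0)
          ((intervalIntegrable_sin_half_rpow hc).const_mul _)
          fun t ht => norm_one_sub_ofReal_mul_exp_rpow_le hr3 hc0 ht
    _ = (2 / √3) ^ (-(α + 1)) * ∫ t in (0 : ℝ)..2 * π, Real.sin (t / 2) ^ (-(α + 1)) :=
        intervalIntegral.integral_const_mul _ _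
    _ ≤ (2 / √3) ^ (-(α + 1)) * (4 * (Real.Gamma (-(α + 1) + 1) * Real.Gamma (1 / 2) /
          Real.Gamma (-(α + 1) + 1 + 1 / 2))) := by
        gcongr
        exact integral_sin_half_rpow_le hc
    _ = _ := by
        rw [← mul_assoc, two_div_sqrt_three_rpow_neg_mul_four, show -(α + 1) + 1 = -α by ring,
          show -α + 1 / 2 = 1 / 2 - α by ring]

/-- For `α ∈ (-1,0)` and `r ∈ [1/2,1)`,
`∫₀^{2π} |1-re^{it}|^{-(α+1)} dt ≤ 3^{(α+1)/2} 2^{1-α} Γ(-α)Γ(1/2)/Γ(1/2-α)`. -/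
theorem stmt8 (α : ℝ) (hα1 : -1 < α) (hα2 : α < 0) (r : ℝ) (hr : 1/2 ≤ r) (hr1 : r < 1) :
    (∫ t in (0:ℝ)..(2 * π),
        ‖1 - (r : ℂ) * Complex.exp ((t : ℂ) * Complex.I)‖ ^ (-(α + 1))) ≤
      (3:ℝ) ^ ((α + 1) / 2) * (2:ℝ) ^ (1 - α) *
        (Real.Gamma (-α) * Real.Gamma (1/2) / Real.Gamma (1/2 - α)) :=
  stmt8_general α hα1 hα2 r hr
end
end

section
/- Let α ∈ (-1,0), let n be a positive integer, and let f(z) = Σ_{k=0}^∞ a_{n,k} |z|^{2k} z^n on D, where a_{n,k} = ((-α/2)_k (n-α/2)_k)/((n+1)_k · k!) and (x)_k = x(x+1)⋯(x+k-1) is the rising factorial. Then for every p ∈ (0,∞], the Hardy type norms of all three partial derivatives are infinite: ‖∂_r f‖_{H^p_G(D)} = ‖∂_z f‖_{H^p_G(D)} = ‖∂_{z̄} f‖_{H^p_G(D)} = ∞. -/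
open MeasureTheory Real Complex Filter Set
open scoped ENNReal Topology NNReal

noncomputable section

/-- The rising factorial `(x)_k = x(x+1)⋯(x+k-1)`. -/
noncomputable def poch (x : ℝ) (k : ℕ) : ℝ := Polynomial.eval x (ascPochhammer ℝ k)

/-- `a_{n,k} = ((-α/2)_k (n-α/2)_k)/((n+1)_k k!)`. -/
noncomputable def coefA (α : ℝ) (n k : ℕ) : ℝ :=
  poch (-α / 2) k * poch ((n : ℝ) - α / 2) k / (poch ((n : ℝ) + 1) k * (Nat.factorial k))

/-- The mapping `f(z) = Σ_{k≥0} a_{n,k} |z|^{2k} z^n`. -/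
noncomputable def exF (α : ℝ) (n : ℕ) (z : ℂ) : ℂ :=
  ∑' k : ℕ, ((coefA α n k * ‖z‖ ^ (2 * k) : ℝ) : ℂ) * z ^ n

/-!
With `G(x) = ∑ₖ a_{n,k} xᵏ` the map is `f(z) = G(|z|²) zⁿ`. Differentiating,
`∂_{z̄} f = G'(|z|²) z^{n+1}`, `∂_z f = (|z|² G'(|z|²) + n G(|z|²)) z^{n-1}` and
`∂_r f(re^{iθ}) = (2r^{n+1} G'(r²) + n r^{n-1} G(r²)) e^{inθ}`; as `G, G' ≥ 0`, all three have
modulus at least `r^{n+1} G'(r²)` on the circle `|z| = r`. The Pochhammer estimate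
`(k+1) a_{n,k+1} ≥ (-α/2) n / (n+1+k)` makes the coefficients of `G'` non-summable, so
`G'(x) → ∞` as `x → 1⁻` and the integral means are unbounded.
-/

open ComplexConjugate

lemma poch_pos {x : ℝ} (hx : 0 < x) (k : ℕ) : 0 < poch x k :=
  ascPochhammer_pos k x hx

lemma poch_one (k : ℕ) : poch 1 k = k.factorial :=
  ascPochhammer_eval_one ℝ k

lemma poch_succ_right (x : ℝ) (k : ℕ) : poch x (k + 1) = poch x k * (x + k) :=
  ascPochhammer_succ_eval k x

lemma poch_succ_left (x : ℝ) (k : ℕ) : poch x (k + 1) = x * poch (x + 1) k := by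
  simp [poch, ascPochhammer_succ_left, Polynomial.eval_comp]

lemma poch_le_poch {x y : ℝ} (hx : 0 < x) (hxy : x ≤ y) (k : ℕ) : poch x k ≤ poch y k := by
  induction k with
  | zero => simp [poch]
  | succ k ih =>
    rw [poch_succ_right, poch_succ_right]
    exact mul_le_mul ih (by linarith) (by positivity) (poch_pos (hx.trans_le hxy) k).le

section Coefficients

variable {α : ℝ} {n : ℕ}

lemma coefA_pos (hα : α < 0) (k : ℕ) : 0 < coefA α n k := by
  have := poch_pos (x := -α / 2) (by linarith) k
  have := poch_pos (x := n - α / 2) (by linarith [(n.cast_nonneg : (0:ℝ) ≤ n)]) k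
  have := poch_pos (x := n + 1) (by positivity) k
  unfold coefA
  positivity

lemma abs_coefA_le_one (hα1 : -1 < α) (hα2 : α < 0) (k : ℕ) : |coefA α n k| ≤ 1 := by
  have hn : (0:ℝ) ≤ n := n.cast_nonneg
  rw [abs_of_pos (coefA_pos hα2 k), coefA,
    div_le_one (by have := poch_pos (x := n + 1) (by positivity) k; positivity),
    mul_comm _ (k.factorial : ℝ), ← poch_one]
  exact mul_le_mul (poch_le_poch (by linarith) (by linarith) k)
    (poch_le_poch (by linarith) (by linarith) k) (poch_pos (by linarith) k).le
    (poch_pos one_pos k).le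

lemma div_le_succ_mul_coefA_succ (hα : α < 0) (hn : 0 < n) (k : ℕ) :
    -α / 2 * n / (n + 1 + k) ≤ (k + 1) * coefA α n (k + 1) := by
  have hn' : (0:ℝ) < n := by exact_mod_cast hn
  have hQ := poch_pos (x := n + 1) (by positivity) k
  have hP1 : -α / 2 * k.factorial ≤ poch (-α / 2) (k + 1) := by
    rw [poch_succ_left, ← poch_one]
    exact mul_le_mul_of_nonneg_left (poch_le_poch one_pos (by linarith) k) (by linarith)
  have hP2 : n * poch (n + 1) k ≤ poch (n - α / 2) (k + 1) := by
    rw [← poch_succ_left]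
    exact poch_le_poch hn' (by linarith) (k + 1)
  unfold coefA
  rw [poch_succ_right (n + 1) k, Nat.factorial_succ, Nat.cast_mul, Nat.cast_succ, mul_div_assoc',
    div_le_div_iff₀ (by positivity) (by positivity)]
  calc -α / 2 * n * (poch (n + 1) k * (n + 1 + k) * ((k + 1) * k.factorial))
      = (-α / 2 * k.factorial) * (n * poch (n + 1) k) * ((k + 1) * (n + 1 + k)) := by ring
    _ ≤ poch (-α / 2) (k + 1) * poch (n - α / 2) (k + 1) * ((k + 1) * (n + 1 + k)) := by
      gcongr
      exact (poch_pos (by linarith) _).le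
    _ = _ := by ring

lemma not_summable_succ_mul_coefA_succ (hα : α < 0) (hn : 0 < n) :
    ¬ Summable fun k : ℕ => (k + 1) * coefA α n (k + 1) := by
  intro h
  have hc : 0 < -α / 2 * n := mul_pos (by linarith) (by exact_mod_cast hn)
  have hharm : Summable fun k : ℕ => 1 / |(k : ℝ) + (n + 1)| ^ (1 : ℝ) := by
    refine (h.of_nonneg_of_le (fun k => by positivity)
      (div_le_succ_mul_coefA_succ hα hn)).mul_left (-α / 2 * n)⁻¹ |>.congr fun k => ?_
    rw [abs_of_pos (by positivity), Real.rpow_one]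
    field_simp [hα.ne]
    ring
  exact absurd ((Real.summable_one_div_nat_add_rpow _ _).1 hharm) (lt_irrefl 1)

end Coefficients

section PowerSeries

variable {a : ℕ → ℝ} {C : ℝ}

lemma summable_mul_pow_of_abs_le (ha : ∀ k, |a k| ≤ C) {x : ℝ} (hx : |x| < 1) :
    Summable fun k => a k * x ^ k :=
  .of_norm_bounded ((summable_geometric_of_lt_one (abs_nonneg x) hx).mul_left C) fun k => by
    rw [norm_mul, norm_pow, Real.norm_eq_abs, Real.norm_eq_abs]
    exact mul_le_mul_of_nonneg_right (ha k) (by positivity)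

lemma summable_natCast_mul_pow_pred {ρ : ℝ} (h0 : 0 ≤ ρ) (h1 : ρ < 1) :
    Summable fun k : ℕ => (k : ℝ) * ρ ^ (k - 1) := by
  refine (summable_nat_add_iff 1).1 ?_
  have h := (summable_pow_mul_geometric_of_norm_lt_one 1
    (by rwa [Real.norm_eq_abs, abs_of_nonneg h0])).add (summable_geometric_of_lt_one h0 h1)
  refine h.congr fun k => ?_
  simp only [pow_one, Nat.cast_add, Nat.cast_one, Nat.add_sub_cancel]
  ring

lemma norm_mul_natCast_mul_pow_pred_le (ha : ∀ k, |a k| ≤ C) (k : ℕ) {y ρ : ℝ} (hy : |y| ≤ ρ) :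
    ‖a k * (k * y ^ (k - 1))‖ ≤ C * (k * ρ ^ (k - 1)) := by
  rw [norm_mul, norm_mul, norm_pow, Real.norm_eq_abs, Real.norm_eq_abs, Real.norm_eq_abs,
    Nat.abs_cast]
  have hC : 0 ≤ C := (abs_nonneg _).trans (ha 0)
  gcongr
  exact ha k

lemma summable_succ_mul_mul_pow (ha : ∀ k, |a k| ≤ C) {x : ℝ} (hx : |x| < 1) :
    Summable fun k : ℕ => (k + 1) * a (k + 1) * x ^ k := by
  have h : Summable fun k : ℕ => a k * (k * x ^ (k - 1)) :=
    .of_norm_bounded ((summable_natCast_mul_pow_pred (abs_nonneg x) hx).mul_left C)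
      fun k => norm_mul_natCast_mul_pow_pred_le ha k le_rfl
  refine ((summable_nat_add_iff 1).2 h).congr fun k => ?_
  simp only [Nat.cast_add, Nat.cast_one, Nat.add_sub_cancel]
  ring

lemma hasDerivAt_tsum_mul_pow (ha : ∀ k, |a k| ≤ C) {x : ℝ} (hx : |x| < 1) :
    HasDerivAt (fun y => ∑' k, a k * y ^ k) (∑' k, (k + 1) * a (k + 1) * x ^ k) x := by
  set ρ := (|x| + 1) / 2
  have hρ0 : 0 < ρ := by positivity
  have hρ : ρ < 1 := by simp only [ρ]; linarith
  have hxρ : x ∈ Metric.ball 0 ρ := by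
    rw [mem_ball_zero_iff, Real.norm_eq_abs]; simp only [ρ]; linarith
  have hderiv := hasDerivAt_tsum_of_isPreconnected
    ((summable_natCast_mul_pow_pred hρ0.le hρ).mul_left C) Metric.isOpen_ball
    (convex_ball 0 ρ).isPreconnected (fun k y _ => (hasDerivAt_pow k y).const_mul (a k))
    (fun k y hy => norm_mul_natCast_mul_pow_pred_le ha k
      (by simpa using (mem_ball_zero_iff.1 hy).le))
    (Metric.mem_ball_self hρ0) (summable_mul_pow_of_abs_le ha (by simp)) hxρ
  refine hderiv.congr_deriv ?_
  rw [Summable.tsum_eq_zero_add]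
  · simp only [Nat.cast_zero, zero_mul, mul_zero, zero_add, Nat.cast_add, Nat.cast_one,
      Nat.add_sub_cancel]
    congr 1 with k
    ring
  · exact (summable_nat_add_iff 1).1 <| (summable_succ_mul_mul_pow ha hx).congr fun k => by
      simp only [Nat.cast_add, Nat.cast_one, Nat.add_sub_cancel]
      ring

lemma tendsto_tsum_mul_pow_atTop {b : ℕ → ℝ} (hb0 : ∀ k, 0 ≤ b k) (hb : ¬ Summable b)
    (hs : ∀ x ∈ Ioo (0 : ℝ) 1, Summable fun k => b k * x ^ k) :
    Tendsto (fun x => ∑' k, b k * x ^ k) (𝓝[<] 1) atTop := by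
  refine tendsto_atTop.2 fun M => ?_
  obtain ⟨N, hN⟩ := (((not_summable_iff_tendsto_nat_atTop_of_nonneg hb0).1 hb).eventually_gt_atTop
    M).exists
  have hpoly : ∀ᶠ x in 𝓝[<] 1, M < ∑ k ∈ Finset.range N, b k * x ^ k := by
    refine nhdsWithin_le_nhds (ContinuousAt.eventually_lt continuousAt_const ?_ (by simpa))
    fun_prop
  filter_upwards [hpoly, Ioo_mem_nhdsLT zero_lt_one] with x hx hx01
  exact hx.le.trans <| (hs x hx01).sum_le_tsum _ fun k _ =>
    mul_nonneg (hb0 k) (pow_nonneg hx01.1.le k)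

end PowerSeries

lemma pderivZ_eq_of_fderiv_apply {F : ℂ → ℂ} {z A B : ℂ}
    (h : ∀ v, fderiv ℝ F z v = A * v + B * conj v) : pderivZ F z = A := by
  simp only [pderivZ, h, map_one, Complex.conj_I]
  linear_combination (B - A) / 2 * Complex.I_sq

lemma pderivZbar_eq_of_fderiv_apply {F : ℂ → ℂ} {z A B : ℂ}
    (h : ∀ v, fderiv ℝ F z v = A * v + B * conj v) : pderivZbar F z = B := by
  simp only [pderivZbar, h, map_one, Complex.conj_I]
  linear_combination (A - B) / 2 * Complex.I_sq

lemma norm_polar (r θ : ℝ) : ‖polar r θ‖ = |r| := by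
  simp [polar, Complex.norm_exp_ofReal_mul_I]

def radialMulPow (g : ℝ → ℝ) (n : ℕ) (z : ℂ) : ℂ := (g (‖z‖ ^ 2) : ℂ) * z ^ n

section RadialMulPow

variable {g : ℝ → ℝ} {g' : ℝ} (n : ℕ)

lemma fderiv_radialMulPow_apply {z : ℂ} (hg : HasDerivAt g g' (‖z‖ ^ 2)) (v : ℂ) :
    fderiv ℝ (radialMulPow g n) z v =
      (g' * conj z * z ^ n + n * g (‖z‖ ^ 2) * z ^ (n - 1)) * v + g' * z ^ (n + 1) * conj v := by
  have h : HasFDerivAt (radialMulPow g n) _ z :=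
    (Complex.ofRealCLM.hasFDerivAt.comp z
      (hg.comp_hasFDerivAt z (hasStrictFDerivAt_norm_sq z).hasFDerivAt)).mul
    ((hasDerivAt_pow n z).hasFDerivAt.restrictScalars ℝ)
  have hre : (2 * (v * conj z).re : ℂ) = conj z * v + z * conj v := by
    rw [Complex.re_eq_add_conj]
    simp only [map_mul, Complex.conj_conj]
    ring
  rw [h.fderiv]
  simp only [Function.comp_apply, ofRealCLM_apply, add_apply, smul_apply,
    ContinuousLinearMap.coe_restrictScalars', ContinuousLinearMap.toSpanSingleton_apply,
    smul_eq_mul, ContinuousLinearMap.comp_apply, coe_innerSL_apply, Complex.inner, nsmul_eq_mul,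
    Nat.cast_ofNat, ofReal_mul, ofReal_ofNat]
  linear_combination (g' * z ^ n) * hre

lemma norm_pderivZbar_radialMulPow {z : ℂ} (hg : HasDerivAt g g' (‖z‖ ^ 2)) :
    ‖pderivZbar (radialMulPow g n) z‖ = |g'| * ‖z‖ ^ (n + 1) := by
  rw [pderivZbar_eq_of_fderiv_apply (fderiv_radialMulPow_apply n hg), norm_mul, norm_pow,
    Complex.norm_real, Real.norm_eq_abs]

lemma le_norm_pderivZ_radialMulPow (hn : 0 < n) {z : ℂ} (hg : HasDerivAt g g' (‖z‖ ^ 2))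
    (hg0 : 0 ≤ g (‖z‖ ^ 2)) (hg'0 : 0 ≤ g') :
    g' * ‖z‖ ^ (n + 1) ≤ ‖pderivZ (radialMulPow g n) z‖ := by
  obtain ⟨m, rfl⟩ : ∃ m, n = m + 1 := ⟨n - 1, by omega⟩
  have hA : g' * conj z * z ^ (m + 1) + (m + 1 : ℕ) * g (‖z‖ ^ 2) * z ^ (m + 1 - 1) =
      ((g' * ‖z‖ ^ 2 + (m + 1 : ℕ) * g (‖z‖ ^ 2) : ℝ) : ℂ) * z ^ m := by
    rw [Nat.add_sub_cancel, Complex.ofReal_add, Complex.ofReal_mul, Complex.ofReal_pow,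
      ← Complex.mul_conj']
    push_cast
    ring
  rw [pderivZ_eq_of_fderiv_apply (fderiv_radialMulPow_apply _ hg), hA, norm_mul, norm_pow,
    Complex.norm_real, Real.norm_eq_abs, abs_of_nonneg (by positivity), add_mul]
  exact le_add_of_le_of_nonneg (le_of_eq (by ring)) (by positivity)

lemma le_norm_radialDeriv_radialMulPow {r : ℝ} (hr : 0 ≤ r) (hg : HasDerivAt g g' (r ^ 2))
    (hg0 : 0 ≤ g (r ^ 2)) (hg'0 : 0 ≤ g') (θ : ℝ) :
    g' * r ^ (n + 1) ≤ ‖radialDeriv (radialMulPow g n) r θ‖ := by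
  have hpolar : (fun s : ℝ => radialMulPow g n (polar s θ)) =
      fun s : ℝ => ((g (s ^ 2) * s ^ n : ℝ) : ℂ) * Complex.exp (θ * Complex.I) ^ n := by
    ext s
    rw [radialMulPow, norm_polar, sq_abs, polar, mul_pow]
    push_cast
    ring
  have hsq : HasDerivAt (fun s : ℝ => s ^ 2) (2 * r) r := by simpa using hasDerivAt_pow 2 r
  have hs : HasDerivAt (fun s : ℝ => g (s ^ 2) * s ^ n)
      (g' * (2 * r) * r ^ n + g (r ^ 2) * (n * r ^ (n - 1))) r :=
    (hg.comp_of_eq r hsq rfl).mul (hasDerivAt_pow n r)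
  rw [radialDeriv, hpolar, (hs.ofReal_comp.mul_const _).deriv, norm_mul, norm_pow,
    Complex.norm_exp_ofReal_mul_I, one_pow, mul_one, Complex.norm_real, Real.norm_eq_abs,
    abs_of_nonneg (by positivity)]
  have hr' : g' * r ^ (n + 1) ≤ g' * (2 * r) * r ^ n := by
    rw [pow_succ]
    nlinarith [mul_nonneg hg'0 (mul_nonneg hr (pow_nonneg hr n))]
  exact le_add_of_le_of_nonneg hr' (by positivity)

end RadialMulPow

lemma ofReal_le_circMean {p : ℝ≥0∞} (hp : p ≠ 0) {h : ℝ → ℂ} {c : ℝ} (hc : ∀ θ, c ≤ ‖h θ‖) :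
    ENNReal.ofReal c ≤ circMean p h := by
  have hce : ∀ θ, ENNReal.ofReal c ≤ ‖h θ‖₊ := fun θ => by
    rw [← enorm_eq_nnnorm, ← ofReal_norm]
    exact ENNReal.ofReal_le_ofReal (hc θ)
  unfold circMean
  split_ifs with hp_top
  · exact le_iSup_of_le 0 (hce 0)
  have hpt : 0 < p.toReal := ENNReal.toReal_pos hp hp_top
  have h2π : ENNReal.ofReal (2 * π) ≠ 0 := (ENNReal.ofReal_pos.2 (by positivity)).ne'
  calc ENNReal.ofReal c
      = ((ENNReal.ofReal c ^ p.toReal * ENNReal.ofReal (2 * π)) / ENNReal.ofReal (2 * π)) ^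
          (1 / p.toReal) := by
        rw [ENNReal.mul_div_cancel_right h2π ENNReal.ofReal_ne_top, ← ENNReal.rpow_mul,
          mul_one_div_cancel hpt.ne', ENNReal.rpow_one]
    _ ≤ _ := by
        gcongr
        calc ENNReal.ofReal c ^ p.toReal * ENNReal.ofReal (2 * π)
            = ∫⁻ _ in Ioc (0 : ℝ) (2 * π), ENNReal.ofReal c ^ p.toReal := by
              rw [setLIntegral_const, Real.volume_Ioc, sub_zero]
          _ ≤ _ := lintegral_mono fun θ => ENNReal.rpow_le_rpow (hce θ) hpt.le

lemma hardyNorm_eq_top_of_tendsto {p : ℝ≥0∞} (hp : p ≠ 0) {g : ℝ → ℝ → ℂ} {c : ℝ → ℝ}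
    (hc : Tendsto c (𝓝[<] 1) atTop) (hg : ∀ r ∈ Ico (0 : ℝ) 1, ∀ θ, c r ≤ ‖g r θ‖) :
    hardyNorm p g = ∞ := by
  refine ENNReal.eq_top_of_forall_nnreal_le fun M => ?_
  obtain ⟨r, hMr, hr⟩ := ((hc.eventually_ge_atTop M).and (Ico_mem_nhdsLT zero_lt_one)).exists
  calc (M : ℝ≥0∞) = ENNReal.ofReal M := (ENNReal.ofReal_coe_nnreal).symm
    _ ≤ ENNReal.ofReal (c r) := ENNReal.ofReal_le_ofReal hMr
    _ ≤ circMean p (g r) := ofReal_le_circMean hp (hg r hr)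
    _ ≤ hardyNorm p g := le_iSup₂ (f := fun r (_ : r ∈ Ico (0 : ℝ) 1) => circMean p (g r)) r hr

section Profile

variable {α : ℝ} {n : ℕ}

def coefSeries (α : ℝ) (n : ℕ) (x : ℝ) : ℝ := ∑' k, coefA α n k * x ^ k

def coefSeriesDeriv (α : ℝ) (n : ℕ) (x : ℝ) : ℝ := ∑' k, (k + 1) * coefA α n (k + 1) * x ^ k

lemma exF_eq_radialMulPow (α : ℝ) (n : ℕ) : exF α n = radialMulPow (coefSeries α n) n := by
  ext z
  simp only [exF, radialMulPow, coefSeries, pow_mul, Complex.ofReal_mul, tsum_mul_right,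
    Complex.ofReal_tsum]

lemma hasDerivAt_coefSeries (hα1 : -1 < α) (hα2 : α < 0) {x : ℝ} (hx : |x| < 1) :
    HasDerivAt (coefSeries α n) (coefSeriesDeriv α n x) x :=
  hasDerivAt_tsum_mul_pow (abs_coefA_le_one hα1 hα2) hx

lemma coefSeries_nonneg (hα : α < 0) {x : ℝ} (hx : 0 ≤ x) : 0 ≤ coefSeries α n x :=
  tsum_nonneg fun k => mul_nonneg (coefA_pos hα k).le (pow_nonneg hx k)

lemma coefSeriesDeriv_nonneg (hα : α < 0) {x : ℝ} (hx : 0 ≤ x) : 0 ≤ coefSeriesDeriv α n x :=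
  tsum_nonneg fun k => by have := coefA_pos (n := n) hα (k + 1); positivity

lemma tendsto_coefSeriesDeriv (hα1 : -1 < α) (hα2 : α < 0) (hn : 0 < n) :
    Tendsto (coefSeriesDeriv α n) (𝓝[<] 1) atTop :=
  tendsto_tsum_mul_pow_atTop (fun k => by have := coefA_pos (n := n) hα2 (k + 1); positivity)
    (not_summable_succ_mul_coefA_succ hα2 hn) fun _ hx =>
      summable_succ_mul_mul_pow (abs_coefA_le_one hα1 hα2) (by rw [abs_of_pos hx.1]; exact hx.2)

lemma tendsto_pow_mul_coefSeriesDeriv_sq (hα1 : -1 < α) (hα2 : α < 0) (hn : 0 < n) :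
    Tendsto (fun r => r ^ (n + 1) * coefSeriesDeriv α n (r ^ 2)) (𝓝[<] 1) atTop := by
  have hsq : Tendsto (fun r : ℝ => r ^ 2) (𝓝[<] 1) (𝓝[<] 1) := by
    refine tendsto_nhdsWithin_of_tendsto_nhds_of_eventually_within _ ?_ ?_
    · simpa using (continuous_pow 2).continuousWithinAt (s := Iio (1 : ℝ)) (x := 1) |>.tendsto
    · filter_upwards [Ioo_mem_nhdsLT zero_lt_one] with r hr
      exact pow_lt_one₀ hr.1.le hr.2 two_ne_zero
  refine Tendsto.pos_mul_atTop one_pos ?_ ((tendsto_coefSeriesDeriv hα1 hα2 hn).comp hsq)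
  simpa using ((continuous_pow (M := ℝ) (n + 1)).tendsto 1).mono_left nhdsWithin_le_nhds

lemma hasDerivAt_coefSeries_sq (hα1 : -1 < α) (hα2 : α < 0) {r : ℝ} (hr : r ∈ Ico (0 : ℝ) 1) :
    HasDerivAt (coefSeries α n) (coefSeriesDeriv α n (r ^ 2)) (r ^ 2) :=
  hasDerivAt_coefSeries hα1 hα2 <| by
    rw [abs_of_nonneg (sq_nonneg r)]
    exact pow_lt_one₀ hr.1 hr.2 two_ne_zero

lemma le_norm_radialDeriv_exF (hα1 : -1 < α) (hα2 : α < 0) {r : ℝ} (hr : r ∈ Ico (0 : ℝ) 1)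
    (θ : ℝ) : r ^ (n + 1) * coefSeriesDeriv α n (r ^ 2) ≤ ‖radialDeriv (exF α n) r θ‖ := by
  rw [mul_comm, exF_eq_radialMulPow]
  exact le_norm_radialDeriv_radialMulPow n hr.1 (hasDerivAt_coefSeries_sq hα1 hα2 hr)
    (coefSeries_nonneg hα2 (sq_nonneg r)) (coefSeriesDeriv_nonneg hα2 (sq_nonneg r)) θ

lemma le_norm_pderivZ_exF (hα1 : -1 < α) (hα2 : α < 0) (hn : 0 < n) {r : ℝ}
    (hr : r ∈ Ico (0 : ℝ) 1) (θ : ℝ) :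
    r ^ (n + 1) * coefSeriesDeriv α n (r ^ 2) ≤ ‖pderivZ (exF α n) (polar r θ)‖ := by
  have hz : ‖polar r θ‖ = r := by rw [norm_polar, abs_of_nonneg hr.1]
  have h := le_norm_pderivZ_radialMulPow n hn (g' := coefSeriesDeriv α n (r ^ 2))
    (by rw [hz]; exact hasDerivAt_coefSeries_sq hα1 hα2 hr)
    (coefSeries_nonneg hα2 (sq_nonneg _)) (coefSeriesDeriv_nonneg hα2 (sq_nonneg _))
  rwa [hz, mul_comm, ← exF_eq_radialMulPow] at h

lemma le_norm_pderivZbar_exF (hα1 : -1 < α) (hα2 : α < 0) {r : ℝ} (hr : r ∈ Ico (0 : ℝ) 1)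
    (θ : ℝ) : r ^ (n + 1) * coefSeriesDeriv α n (r ^ 2) ≤ ‖pderivZbar (exF α n) (polar r θ)‖ := by
  have hz : ‖polar r θ‖ = r := by rw [norm_polar, abs_of_nonneg hr.1]
  rw [exF_eq_radialMulPow, norm_pderivZbar_radialMulPow n (g' := coefSeriesDeriv α n (r ^ 2))
    (by rw [hz]; exact hasDerivAt_coefSeries_sq hα1 hα2 hr), hz,
    abs_of_nonneg (coefSeriesDeriv_nonneg hα2 (sq_nonneg r)), mul_comm]

end Profile

/-- For `α ∈ (-1,0)`, `n ≥ 1`, and `f(z) = Σ_k a_{n,k}|z|^{2k} z^n`, the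
Hardy type norms of `∂_r f`, `∂_z f`, `∂_{z̄} f` are infinite for all `p ∈ (0,∞]`. -/
theorem stmt15 (α : ℝ) (hα1 : -1 < α) (hα2 : α < 0) (n : ℕ) (hn : 0 < n)
    (p : ℝ≥0∞) (hp : 0 < p) :
    hardyNorm p (radialDeriv (exF α n)) = ∞ ∧
    hardyNorm p (fun r θ => pderivZ (exF α n) (polar r θ)) = ∞ ∧
    hardyNorm p (fun r θ => pderivZbar (exF α n) (polar r θ)) = ∞ := by
  have hc := tendsto_pow_mul_coefSeriesDeriv_sq hα1 hα2 hn
  exact ⟨hardyNorm_eq_top_of_tendsto hp.ne' hc fun _ hr => le_norm_radialDeriv_exF hα1 hα2 hr,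
    hardyNorm_eq_top_of_tendsto hp.ne' hc fun _ hr => le_norm_pderivZ_exF hα1 hα2 hn hr,
    hardyNorm_eq_top_of_tendsto hp.ne' hc fun _ hr => le_norm_pderivZbar_exF hα1 hα2 hr⟩
end
end
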